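/- Let n ≥ 1, 0 ≤ t < 1, and a > 0. Define ρ₋(x) := ‖x‖ − t·xₙ on ℝⁿ (Euclidean norm minus t times the last coordinate), and let ωₙ denote the Lebesgue measure of the Euclidean unit ball in ℝⁿ. Then the Lebesgue measure of the backward metric ball {x ∈ ℝⁿ : ρ₋(x) < a} equals ωₙ·aⁿ·(1−t²)^{−(n+1)/2}. -/

import Mathlib

/-!
With `s = 1 - t²`, squaring turns `‖x‖ < a + t xₙ` into
`(s xₙ - a t)² + s (‖x‖² - xₙ²) < a²`; the sign condition `a + t xₙ > 0` comes for free because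
`|t xₙ| ≤ ‖x‖`. So the backward ball is the ellipsoid centred at `(a t / s) eₙ` with semi-axis
`a / s` along `eₙ` and `a / √s` in the other directions, i.e. the preimage of the unit ball under
a translation followed by a diagonal linear map of determinant `s^((n+1)/2) / aⁿ`.
-/

open MeasureTheory

theorem EuclideanSpace.norm_sub_single_sq {ι : Type*} [Fintype ι] [DecidableEq ι]
    (x : EuclideanSpace ℝ ι) (i : ι) (b : ℝ) :
    ‖x - EuclideanSpace.single i b‖ ^ 2 = ‖x‖ ^ 2 - x i ^ 2 + (x i - b) ^ 2 := by
  rw [norm_sub_sq_real, EuclideanSpace.inner_single_right, PiLp.norm_single, Real.norm_eq_abs,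
    sq_abs]
  simp only [conj_trivial]
  ring

theorem sub_mul_lt_iff_of_sq_le {r z t a : ℝ} (hr : 0 ≤ r) (hz : z ^ 2 ≤ r ^ 2) (ht : t ^ 2 < 1)
    (ha : 0 < a) :
    r - t * z < a ↔ ((1 - t ^ 2) * z - a * t) ^ 2 + (1 - t ^ 2) * (r ^ 2 - z ^ 2) < a ^ 2 := by
  have hs : 0 < 1 - t ^ 2 := by linarith
  have hexpand : ((1 - t ^ 2) * z - a * t) ^ 2 + (1 - t ^ 2) * (r ^ 2 - z ^ 2)
      = (1 - t ^ 2) * (r ^ 2 - (a + t * z) ^ 2) + a ^ 2 := by ring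
  rw [hexpand, add_lt_iff_neg_right, mul_neg_iff]
  simp only [hs, hs.not_gt, true_and, false_and, or_false, sub_neg]
  -- `|t z| ≤ r`, so `r² < (a + t z)²` already forces `a + t z > 0`
  have hpos : r ^ 2 < (a + t * z) ^ 2 → 0 < a + t * z := by
    intro h
    have htz : (t * z) ^ 2 ≤ r ^ 2 := by
      rw [mul_pow]; nlinarith [sq_nonneg t, sq_nonneg z]
    nlinarith [abs_le_of_sq_le_sq' htz hr]
  rw [sub_lt_iff_lt_add]
  exact ⟨fun h => pow_lt_pow_left₀ h hr two_ne_zero,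
    fun h => lt_of_pow_lt_pow_left₀ 2 (hpos h).le h⟩

section

variable {ι : Type*} [Fintype ι] [DecidableEq ι]

noncomputable def stretchCoord (i₀ : ι) (k : ℝ) : EuclideanSpace ℝ ι →ₗ[ℝ] EuclideanSpace ℝ ι :=
  Matrix.toEuclideanLin (Matrix.diagonal (Pi.mulSingle i₀ k))

theorem stretchCoord_apply (i₀ : ι) (k : ℝ) (y : EuclideanSpace ℝ ι) (i : ι) :
    stretchCoord i₀ k y i = (Pi.mulSingle i₀ k : ι → ℝ) i * y i := by
  simp [stretchCoord, Matrix.toLpLin_apply, Matrix.mulVec_diagonal]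

theorem det_stretchCoord (i₀ : ι) (k : ℝ) : LinearMap.det (stretchCoord i₀ k) = k := by
  rw [stretchCoord, LinearMap.det_toLpLin, Matrix.det_diagonal, Finset.prod_pi_mulSingle',
    if_pos (Finset.mem_univ _)]

theorem norm_stretchCoord_sq (i₀ : ι) (k : ℝ) (y : EuclideanSpace ℝ ι) :
    ‖stretchCoord i₀ k y‖ ^ 2 = ‖y‖ ^ 2 + (k ^ 2 - 1) * y i₀ ^ 2 := by
  have hcoord : ∀ i, stretchCoord i₀ k y i ^ 2 =
      y i ^ 2 + if i = i₀ then (k ^ 2 - 1) * y i₀ ^ 2 else 0 := by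
    intro i
    rw [stretchCoord_apply]
    by_cases hi : i = i₀
    · subst hi; simp; ring
    · simp [hi]
  simp only [EuclideanSpace.real_norm_sq_eq, hcoord, Finset.sum_add_distrib, Finset.sum_ite_eq',
    Finset.mem_univ, if_true]

theorem setOf_norm_sub_mul_lt_eq_preimage (i₀ : ι) {t a : ℝ} (ht : t ^ 2 < 1) (ha : 0 < a) :
    {x : EuclideanSpace ℝ ι | ‖x‖ - t * x i₀ < a} =
      (fun x => x + -EuclideanSpace.single i₀ (a * t / (1 - t ^ 2))) ⁻¹'
        ((√(1 - t ^ 2) / a) • stretchCoord i₀ √(1 - t ^ 2)) ⁻¹' Metric.ball 0 1 := by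
  have hs : 0 < 1 - t ^ 2 := by linarith
  ext x
  have hcoord : x i₀ ^ 2 ≤ ‖x‖ ^ 2 := by
    simpa [Real.norm_eq_abs, sq_abs] using
      pow_le_pow_left₀ (norm_nonneg _) (PiLp.norm_apply_le x i₀) 2
  have hnorm : ‖(√(1 - t ^ 2) / a) • stretchCoord i₀ √(1 - t ^ 2)
        (x - EuclideanSpace.single i₀ (a * t / (1 - t ^ 2)))‖ ^ 2 =
      (((1 - t ^ 2) * x i₀ - a * t) ^ 2 + (1 - t ^ 2) * (‖x‖ ^ 2 - x i₀ ^ 2)) / a ^ 2 := by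
    rw [norm_smul, mul_pow, norm_stretchCoord_sq, EuclideanSpace.norm_sub_single_sq,
      PiLp.sub_apply, PiLp.single_apply, if_pos rfl, Real.norm_eq_abs, sq_abs,
      div_pow, Real.sq_sqrt hs.le]
    field_simp
    ring
  simp only [Set.mem_ofPred_eq, Set.mem_preimage, mem_ball_zero_iff, LinearMap.smul_apply,
    ← sub_eq_add_neg]
  rw [sub_mul_lt_iff_of_sq_le (norm_nonneg x) hcoord ht ha, ← sq_lt_one_iff₀ (norm_nonneg _),
    hnorm, div_lt_one (by positivity)]

theorem det_smul_stretchCoord_sqrt (i₀ : ι) {s a : ℝ} (hs : 0 ≤ s) :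
    LinearMap.det ((√s / a) • stretchCoord i₀ √s) =
      s ^ (((Fintype.card ι : ℝ) + 1) / 2) / a ^ Fintype.card ι := by
  rw [LinearMap.det_smul, det_stretchCoord, finrank_euclideanSpace, div_pow, div_mul_eq_mul_div,
    Real.sqrt_eq_rpow, ← Real.rpow_natCast, ← Real.rpow_mul hs, ← Real.rpow_add' hs]
  · ring_nf
  · positivity

theorem volume_setOf_norm_sub_mul_lt (i₀ : ι) {t a : ℝ} (ht : t ^ 2 < 1) (ha : 0 < a) :
    volume {x : EuclideanSpace ℝ ι | ‖x‖ - t * x i₀ < a} =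
      ENNReal.ofReal (a ^ Fintype.card ι * (1 - t ^ 2) ^ (-(((Fintype.card ι : ℝ) + 1) / 2))) *
        volume (Metric.ball (0 : EuclideanSpace ℝ ι) 1) := by
  have hs : 0 < 1 - t ^ 2 := by linarith
  have hdet := det_smul_stretchCoord_sqrt i₀ (a := a) hs.le
  rw [setOf_norm_sub_mul_lt_eq_preimage i₀ ht ha, measure_preimage_add_right,
    Measure.addHaar_preimage_linearMap _ (by rw [hdet]; positivity), hdet, inv_div,
    abs_of_pos (by positivity), Real.rpow_neg hs.le, div_eq_mul_inv]

end

/-- **Volume of the backward metric ball** of the Randers metric `F(y) = ‖y‖ + t yₙ` on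
`ℝⁿ` (`0 ≤ t < 1`): for `a > 0`, the Lebesgue measure of `{ρ₋ < a}`, where
`ρ₋(x) = ‖x‖ − t xₙ`, equals `ωₙ aⁿ (1−t²)^{−(n+1)/2}`, with `ωₙ` the Lebesgue measure
of the Euclidean unit ball. -/
theorem stmt_15 (n : ℕ) (hn : 1 ≤ n) (t a : ℝ) (ht0 : 0 ≤ t) (ht1 : t < 1) (ha : 0 < a)
    (ρm : EuclideanSpace ℝ (Fin n) → ℝ)
    (hρm : ∀ x : EuclideanSpace ℝ (Fin n), ρm x = ‖x‖ - t * x ⟨n - 1, by omega⟩) :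
    (volume {x : EuclideanSpace ℝ (Fin n) | ρm x < a}).toReal =
      (volume (Metric.ball (0 : EuclideanSpace ℝ (Fin n)) 1)).toReal * a ^ n *
        (1 - t ^ 2) ^ (-(((n : ℝ) + 1) / 2)) := by
  have ht : t ^ 2 < 1 := by nlinarith
  have hs : 0 < 1 - t ^ 2 := by linarith
  simp only [hρm]
  rw [volume_setOf_norm_sub_mul_lt _ ht ha, ENNReal.toReal_mul,
    ENNReal.toReal_ofReal (by positivity), Fintype.card_fin]
  ring
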